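/- Let 0 < p < ∞ and N ≥ 1, and let f_N = Σ_{j=0}^{N-1} h_{j,0}. Then 2^{N/p}·‖Δ²_{2^{-N}} f_N‖_{L^p(ℝ)} ≥ N, where Δ²_δ g(x) = g(x+2δ) - 2g(x+δ) + g(x). -/

import Mathlib

/-!
With `δ = 2^{-N}` and `x ∈ [-2δ, -δ)`, every `h(2^j (x + 2δ))` with `j < N` equals `1`, while
`x + δ` and `x` are negative; so `Δ²_δ f_N = N` on an interval of length `δ`, and
`‖Δ²_δ f_N‖_p ≥ N δ^{1/p} = N 2^{-N/p}`. Integrability holds since `Δ²_δ f_N` is bounded with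
compact support.
-/

open MeasureTheory Real

/-- The Haar mother function `h = 𝟙_{[0,1/2)} - 𝟙_{[1/2,1)}`. -/
noncomputable def haar (x : ℝ) : ℝ :=
  if 0 ≤ x ∧ x < 1/2 then 1 else if 1/2 ≤ x ∧ x < 1 then -1 else 0

open Set

/-- `Δ²_δ g`. -/
noncomputable def secondDiff (δ : ℝ) (g : ℝ → ℝ) (x : ℝ) : ℝ :=
  g (x + 2 * δ) - 2 * g (x + δ) + g x

/-- `f_N = Σ_{j<N} h_{j,0}`. -/
noncomputable def haarSum (N : ℕ) (x : ℝ) : ℝ :=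
  ∑ j ∈ Finset.range N, haar (2 ^ j * x)

lemma haar_eq_zero_of_notMem_Ico {x : ℝ} (hx : x ∉ Ico 0 1) : haar x = 0 := by
  rw [mem_Ico, not_and_or, not_le, not_lt] at hx
  unfold haar
  split_ifs with h₁ h₂
  · rcases hx with hx | hx <;> linarith [h₁.1, h₁.2]
  · rcases hx with hx | hx <;> linarith [h₂.1, h₂.2]
  · rfl

lemma haar_eq_one {x : ℝ} (h₀ : 0 ≤ x) (h₁ : x < 1 / 2) : haar x = 1 :=
  if_pos ⟨h₀, h₁⟩

lemma abs_haar_le_one (x : ℝ) : |haar x| ≤ 1 := by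
  unfold haar
  split_ifs <;> norm_num

lemma measurable_haar : Measurable haar :=
  Measurable.ite measurableSet_Ico measurable_const
    (Measurable.ite measurableSet_Ico measurable_const measurable_const)

lemma haarSum_eq_zero_of_notMem_Ico (N : ℕ) {x : ℝ} (hx : x ∉ Ico 0 1) : haarSum N x = 0 := by
  refine Finset.sum_eq_zero fun j _ => haar_eq_zero_of_notMem_Ico ?_
  rw [mem_Ico, not_and_or, not_le, not_lt] at hx ⊢
  have h2j : (1 : ℝ) ≤ 2 ^ j := one_le_pow₀ one_le_two
  rcases hx with hx | hx
  · exact .inl (mul_neg_of_pos_of_neg (by positivity) hx)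
  · exact .inr (one_le_mul_of_one_le_of_one_le h2j hx)

lemma haarSum_eq_of_nonneg_of_lt {N : ℕ} {x : ℝ} (h₀ : 0 ≤ x) (h₁ : 2 ^ N * x < 1) :
    haarSum N x = N := by
  rw [haarSum, Finset.sum_congr rfl fun j hj => haar_eq_one (by positivity) ?_]
  · simp
  have h2j : (2 : ℝ) ^ (j + 1) ≤ 2 ^ N := pow_le_pow_right₀ one_le_two (Finset.mem_range.1 hj)
  nlinarith [pow_succ (2 : ℝ) j]

lemma abs_haarSum_le (N : ℕ) (x : ℝ) : |haarSum N x| ≤ N :=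
  calc |haarSum N x| ≤ ∑ j ∈ Finset.range N, |haar (2 ^ j * x)| := Finset.abs_sum_le_sum_abs _ _
    _ ≤ ∑ _j ∈ Finset.range N, (1 : ℝ) := Finset.sum_le_sum fun j _ => abs_haar_le_one _
    _ = N := by simp

lemma measurable_haarSum (N : ℕ) : Measurable (haarSum N) :=
  Finset.measurable_fun_sum _ fun _ _ => measurable_haar.comp (measurable_const_mul _)

lemma Measurable.secondDiff {g : ℝ → ℝ} (hg : Measurable g) (δ : ℝ) :
    Measurable (secondDiff δ g) :=
  ((hg.comp (measurable_add_const _)).sub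
    ((hg.comp (measurable_add_const _)).const_mul 2)).add hg

lemma abs_secondDiff_le {g : ℝ → ℝ} {M : ℝ} (hg : ∀ y, |g y| ≤ M) (δ x : ℝ) :
    |secondDiff δ g x| ≤ 4 * M := by
  have h₁ := hg (x + 2 * δ)
  have h₂ := hg (x + δ)
  have h₃ := hg x
  unfold secondDiff
  rw [abs_le] at *
  constructor <;> linarith

lemma secondDiff_eq_zero_of_notMem_Icc {g : ℝ → ℝ} {a b δ : ℝ} (hg : ∀ y ∉ Icc a b, g y = 0)
    (hδ : 0 ≤ δ) {x : ℝ} (hx : x ∉ Icc (a - 2 * δ) b) : secondDiff δ g x = 0 := by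
  rw [mem_Icc, not_and_or, not_le, not_le] at hx
  have hg' : ∀ t, 0 ≤ t → t ≤ 2 * δ → g (x + t) = 0 := fun t ht₀ ht₁ =>
    hg _ fun h => by rcases hx with hx | hx <;> linarith [h.1, h.2]
  unfold secondDiff
  rw [hg' (2 * δ) (by linarith) le_rfl, hg' δ hδ (by linarith),
    show g x = 0 by simpa using hg' 0 le_rfl (by linarith)]
  ring

lemma secondDiff_haarSum_eq {N : ℕ} {δ x : ℝ} (hδ : 2 ^ N * δ = 1)
    (hx : x ∈ Ico (-(2 * δ)) (-δ)) : secondDiff δ (haarSum N) x = N := by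
  obtain ⟨hx₁, hx₂⟩ := hx
  have hpeak : haarSum N (x + 2 * δ) = N :=
    haarSum_eq_of_nonneg_of_lt (by linarith) (by nlinarith [pow_pos (two_pos : (0 : ℝ) < 2) N])
  have hneg : ∀ y < 0, haarSum N y = 0 := fun y hy =>
    haarSum_eq_zero_of_notMem_Ico N fun h => (h.1.trans_lt hy).false
  rw [secondDiff, hpeak, hneg _ (by linarith), hneg _ (by linarith)]
  ring

lemma integrable_rpow_abs_of_bounded {f : ℝ → ℝ} {M a b p : ℝ} (hf : Measurable f)
    (hM : ∀ x, |f x| ≤ M) (hsupp : ∀ x ∉ Icc a b, f x = 0) (hp : 0 < p) :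
    Integrable fun x => |f x| ^ p := by
  refine IntegrableOn.integrable_of_forall_notMem_eq_zero (s := Icc a b) ?_ fun x hx => ?_
  · refine Measure.integrableOn_of_bounded (M := M ^ p) measure_Icc_lt_top.ne
      (hf.abs.pow_const p).aestronglyMeasurable (ae_of_all _ fun x => ?_)
    rw [norm_eq_abs, abs_of_nonneg (by positivity)]
    exact rpow_le_rpow (abs_nonneg _) (hM x) hp.le
  · simp [hsupp x hx, zero_rpow hp.ne']

lemma abs_mul_rpow_le_integral_rpow_abs {f : ℝ → ℝ} {a b c p : ℝ} (hp : 0 < p) (hab : a ≤ b)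
    (hf : Integrable fun x => |f x| ^ p) (hc : ∀ x ∈ Ico a b, f x = c) :
    |c| * (b - a) ^ (1 / p) ≤ (∫ x, |f x| ^ p) ^ (1 / p) := by
  have hset : ∫ x in Ico a b, |f x| ^ p = |c| ^ p * (b - a) := by
    rw [setIntegral_congr_fun measurableSet_Ico fun x hx => by rw [hc x hx], setIntegral_const,
      measureReal_def, volume_Ico, ENNReal.toReal_ofReal (by linarith), smul_eq_mul, mul_comm]
  have hle : |c| ^ p * (b - a) ≤ ∫ x, |f x| ^ p :=
    hset ▸ setIntegral_le_integral hf (ae_of_all _ fun x => by positivity)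
  calc |c| * (b - a) ^ (1 / p) = (|c| ^ p * (b - a)) ^ (1 / p) := by
        rw [mul_rpow (by positivity) (by linarith), ← rpow_mul (abs_nonneg c),
          mul_one_div_cancel hp.ne', rpow_one]
    _ ≤ (∫ x, |f x| ^ p) ^ (1 / p) := by gcongr

theorem second_difference_lower_bound_general (p : ℝ) (hp : 0 < p) (N : ℕ) :
    (N : ℝ) ≤ 2 ^ ((N:ℝ)/p) *
      (∫ x : ℝ,
        |(∑ j ∈ Finset.range N, haar (2 ^ j * (x + 2 * 2 ^ (-(N:ℝ)))))
          - 2 * (∑ j ∈ Finset.range N, haar (2 ^ j * (x + 2 ^ (-(N:ℝ)))))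
          + ∑ j ∈ Finset.range N, haar (2 ^ j * x)| ^ p) ^ (1/p) := by
  set δ : ℝ := 2 ^ (-(N:ℝ)) with hδ_def
  show (N : ℝ) ≤ 2 ^ ((N:ℝ)/p) * (∫ x : ℝ, |secondDiff δ (haarSum N) x| ^ p) ^ (1/p)
  have hδ_pos : 0 < δ := by positivity
  have hδ : 2 ^ N * δ = 1 := by
    rw [hδ_def, rpow_neg zero_le_two, rpow_natCast, mul_inv_cancel₀ (by positivity)]
  have hint : Integrable fun x => |secondDiff δ (haarSum N) x| ^ p :=
    integrable_rpow_abs_of_bounded ((measurable_haarSum N).secondDiff δ)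
      (abs_secondDiff_le (abs_haarSum_le N) δ)
      (fun x => secondDiff_eq_zero_of_notMem_Icc
        (fun y hy => haarSum_eq_zero_of_notMem_Ico N fun h => hy (Ico_subset_Icc_self h))
        hδ_pos.le) hp
  have hplateau := abs_mul_rpow_le_integral_rpow_abs hp (by linarith) hint
    fun x hx => secondDiff_haarSum_eq hδ hx
  have hscale : (2 : ℝ) ^ ((N : ℝ) / p) * (-δ - -(2 * δ)) ^ (1 / p) = 1 := by
    rw [show -δ - -(2 * δ) = δ by ring, hδ_def, ← rpow_mul zero_le_two, ← rpow_add two_pos]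
    ring_nf
    exact rpow_zero 2
  calc (N : ℝ) = 2 ^ ((N : ℝ) / p) * (|(N : ℝ)| * (-δ - -(2 * δ)) ^ (1 / p)) := by
        rw [Nat.abs_cast, mul_left_comm, hscale, mul_one]
    _ ≤ _ := by gcongr

/-- For `f_N = Σ_{j<N} h_{j,0}` one has `2^{N/p} ‖Δ²_{2^{-N}} f_N‖_p ≥ N`. -/
theorem second_difference_lower_bound (p : ℝ) (hp : 0 < p) (N : ℕ) (hN : 1 ≤ N) :
    (N : ℝ) ≤ 2 ^ ((N:ℝ)/p) *
      (∫ x : ℝ,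
        |(∑ j ∈ Finset.range N, haar (2 ^ j * (x + 2 * 2 ^ (-(N:ℝ)))))
          - 2 * (∑ j ∈ Finset.range N, haar (2 ^ j * (x + 2 ^ (-(N:ℝ)))))
          + ∑ j ∈ Finset.range N, haar (2 ^ j * x)| ^ p) ^ (1/p) :=
  second_difference_lower_bound_general p hp N
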